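/- arXiv:1001.1475 — 7 statements merged into one kernel-verified Lean document; each statement's English description precedes it below -/
import Mathlib

section
/- Let G and H be profinite groups, let f : G → H be a continuous surjective group homomorphism, and let g : H → G be a continuous group homomorphism such that f ∘ g is the identity on H. If X is a subset of G that topologically generates G, then the kernel of f is equal to the smallest closed normal subgroup of G containing the set {g(f(x))·x⁻¹ : x ∈ X} (i.e., the topological closure of the normal closure of that set). -/
/-!
Both sides are closed normal subgroups. The kernel of `f` is closed and contains every
`g (f x) * x⁻¹`, so it contains the right-hand side. Conversely, if `N` is a closed normal
subgroup containing these elements, then the continuous homomorphisms `x ↦ g (f x) N` and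
`x ↦ x N` into the Hausdorff group `G ⧸ N` agree on the topological generators `X`, hence
everywhere; on `ker f` the first one is trivial, so `ker f ≤ N`.
-/

namespace MonoidHom

variable {G M : Type*} [Group G] [TopologicalSpace G] [Group M] [TopologicalSpace M]

theorem isClosed_ker [T1Space M] {f : G →* M} (hf : Continuous f) : IsClosed (f.ker : Set G) :=
  isClosed_singleton.preimage hf

theorem eq_of_eqOn_of_topologicalClosure_closure_eq_top [IsTopologicalGroup G] [T2Space M]
    {φ ψ : G →* M} (hφ : Continuous φ) (hψ : Continuous ψ) {X : Set G}
    (hX : (Subgroup.closure X).topologicalClosure = ⊤) (h : Set.EqOn φ ψ X) : φ = ψ := by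
  have hle : (⊤ : Subgroup G) ≤ φ.eqLocus ψ :=
    hX ▸ Subgroup.topologicalClosure_minimal _ ((Subgroup.closure_le _).2 h) (isClosed_eq hφ hψ)
  exact ext fun x => hle (Subgroup.mem_top x)

theorem topologicalClosure_normalClosure_le_ker [IsTopologicalGroup G] [T1Space M] {f : G →* M}
    (hf : Continuous f) {S : Set G} (hS : S ⊆ f.ker) :
    (Subgroup.normalClosure S).topologicalClosure ≤ f.ker :=
  Subgroup.topologicalClosure_minimal _ (Subgroup.normalClosure_le_normal hS) (isClosed_ker hf)

theorem ker_le_of_mul_inv_mem {H : Type*} [Group H] [TopologicalSpace H] [IsTopologicalGroup G]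
    {f : G →* H} (hf : Continuous f) {g : H →* G} (hg : Continuous g) {X : Set G}
    (hX : (Subgroup.closure X).topologicalClosure = ⊤) {N : Subgroup G} [N.Normal]
    (hN : IsClosed (N : Set G)) (hXN : ∀ x ∈ X, g (f x) * x⁻¹ ∈ N) : f.ker ≤ N := by
  have : IsClosed (N : Set G) := hN -- as an instance, it makes `G ⧸ N` Hausdorff
  let π := QuotientGroup.mk' N
  have hπ : Continuous π := QuotientGroup.continuous_mk
  have hcomp : π.comp (g.comp f) = π :=
    eq_of_eqOn_of_topologicalClosure_closure_eq_top (hπ.comp (hg.comp hf)) hπ hX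
      fun x hx => QuotientGroup.eq_iff_div_mem.2 (by simpa [div_eq_mul_inv] using hXN x hx)
  intro k hk
  have hπk : π k = 1 := by
    rw [← hcomp]
    simp [mem_ker.1 hk]
  exact (QuotientGroup.eq_one_iff k).1 hπk

end MonoidHom

theorem stmt0_general {G H : Type*}
    [Group G] [TopologicalSpace G] [IsTopologicalGroup G]
    [Group H] [TopologicalSpace H] [T2Space H]
    (f : G →* H) (hf_cont : Continuous f)
    (g : H →* G) (hg_cont : Continuous g) (hfg : ∀ h : H, f (g h) = h)
    (X : Set G) (hX : (Subgroup.closure X).topologicalClosure = ⊤) :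
    f.ker = (Subgroup.normalClosure ((fun x => g (f x) * x⁻¹) '' X)).topologicalClosure := by
  refine le_antisymm ?_ (f.topologicalClosure_normalClosure_le_ker hf_cont ?_)
  · have := Subgroup.is_normal_topologicalClosure
      (Subgroup.normalClosure ((fun x => g (f x) * x⁻¹) '' X))
    exact f.ker_le_of_mul_inv_mem hf_cont hg_cont hX (Subgroup.isClosed_topologicalClosure _)
      fun x hx => Subgroup.le_topologicalClosure _ (Subgroup.subset_normalClosure ⟨x, hx, rfl⟩)
  · rintro _ ⟨x, -, rfl⟩
    simp [MonoidHom.mem_ker, hfg]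

/-- For profinite groups `G`, `H`, a continuous surjective homomorphism
`f : G → H`, a continuous homomorphism `g : H → G` with `f ∘ g = id`, and a subset `X`
topologically generating `G`, the kernel of `f` equals the smallest closed normal subgroup
of `G` containing `{g(f(x)) * x⁻¹ : x ∈ X}` (the topological closure of the normal closure). -/
theorem stmt0 {G H : Type*}
    [Group G] [TopologicalSpace G] [IsTopologicalGroup G]
    [CompactSpace G] [T2Space G] [TotallyDisconnectedSpace G]
    [Group H] [TopologicalSpace H] [IsTopologicalGroup H]
    [CompactSpace H] [T2Space H] [TotallyDisconnectedSpace H]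
    (f : G →* H) (hf_cont : Continuous f) (hf_surj : Function.Surjective f)
    (g : H →* G) (hg_cont : Continuous g) (hfg : ∀ h : H, f (g h) = h)
    (X : Set G) (hX : (Subgroup.closure X).topologicalClosure = ⊤) :
    f.ker = (Subgroup.normalClosure ((fun x => g (f x) * x⁻¹) '' X)).topologicalClosure :=
  stmt0_general f hf_cont g hg_cont hfg X hX
end

section
/- Let T be a profinite group that is topologically generated by a finite subset, and let φ : T → T be a continuous group automorphism. Then for every t ∈ T, the sequence n ↦ φ^(n!)(t) (the (n!)-fold iterate of φ applied to t) converges to t as n → ∞. -/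
/-! An open normal subgroup of index at most `m` is the kernel of a homomorphism to
`Perm (Fin m)`, and such a homomorphism is determined by its values on a finite topological
generating set; so there are only finitely many such subgroups. Their intersection `K` is an
open normal subgroup that every continuous surjective endomorphism `φ` maps into itself (taking
preimages preserves normality, openness and the index), so `φ` induces a surjective, hence
bijective, self-map of the finite set `T ⧸ K`. Its iterates become trivial along the multiples
of its order, in particular along `n!`; and in a profinite group the open normal subgroups form
a neighbourhood basis of `1`. -/

theorem MonoidHom.eq_of_eqOn_of_isOpen_ker {G M : Type*} [Group G] [TopologicalSpace G]
    [IsTopologicalGroup G] [Group M] {X : Set G}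
    (hX : (Subgroup.closure X).topologicalClosure = ⊤) {f g : G →* M}
    (hf : IsOpen (f.ker : Set G)) (hg : IsOpen (g.ker : Set G)) (hfg : Set.EqOn f g X) :
    f = g := by
  have hker : f.ker ⊓ g.ker ≤ f.eqLocus g := fun x ⟨(hfx : f x = 1), (hgx : g x = 1)⟩ =>
    show f x = g x by rw [hfx, hgx]
  have hclosed : IsClosed (f.eqLocus g : Set G) :=
    Subgroup.isClosed_of_isOpen _ (Subgroup.isOpen_mono hker (hf.inter hg))
  have htop : ⊤ ≤ f.eqLocus g :=
    hX ▸ Subgroup.topologicalClosure_minimal _ ((Subgroup.closure_le _).2 hfg) hclosed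
  exact MonoidHom.ext fun x => htop (Subgroup.mem_top x)

theorem Subgroup.exists_monoidHom_perm_ker_eq {G : Type*} [Group G] (N : Subgroup G) [N.Normal]
    [N.FiniteIndex] {m : ℕ} (hm : N.index ≤ m) :
    ∃ f : G →* Equiv.Perm (Fin m), f.ker = N := by
  have : Fintype (G ⧸ N) := Fintype.ofFinite _
  obtain ⟨ι⟩ : Nonempty (G ⧸ N ↪ Fin m) := Function.Embedding.nonempty_of_card_le <| by
    simpa [Subgroup.index, Nat.card_eq_fintype_card] using hm
  refine ⟨(Equiv.Perm.viaEmbeddingHom ι).comp (MulAction.toPermHom G (G ⧸ N)), ?_⟩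
  rw [MonoidHom.ker_comp_of_injective _ _ (Equiv.Perm.viaEmbeddingHom_injective ι),
    ← Subgroup.normalCore_eq_ker, Subgroup.normalCore_eq_self]

theorem finite_setOf_normal_isOpen_index_le {G : Type*} [Group G] [TopologicalSpace G]
    [IsTopologicalGroup G] [CompactSpace G] {X : Set G} (hXfin : X.Finite)
    (hX : (Subgroup.closure X).topologicalClosure = ⊤) (m : ℕ) :
    {N : Subgroup G | N.Normal ∧ IsOpen (N : Set G) ∧ N.index ≤ m}.Finite := by
  set S := {N : Subgroup G | N.Normal ∧ IsOpen (N : Set G) ∧ N.index ≤ m}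
  have hperm : ∀ N : Subgroup G, ∃ f : G →* Equiv.Perm (Fin m), N ∈ S → f.ker = N := by
    intro N
    by_cases hN : N ∈ S
    · obtain ⟨_, hopen, hm⟩ := hN
      have := N.quotient_finite_of_isOpen hopen
      have : N.FiniteIndex := Subgroup.finiteIndex_of_finite_quotient
      obtain ⟨f, hf⟩ := N.exists_monoidHom_perm_ker_eq hm
      exact ⟨f, fun _ => hf⟩
    · exact ⟨1, fun h => absurd h hN⟩
  choose f hf using hperm
  have hopen : ∀ N ∈ S, IsOpen ((f N).ker : Set G) := fun N hN => by
    rw [hf N hN]; exact hN.2.1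
  have : Finite X := hXfin
  refine Set.Finite.of_finite_image (f := fun N => X.domRestrict (f N)) (Set.toFinite _) ?_
  intro N hN N' hN' hNN'
  have hff' : f N = f N' := MonoidHom.eq_of_eqOn_of_isOpen_ker hX (hopen N hN) (hopen N' hN')
    fun x hx => congrFun hNN' ⟨x, hx⟩
  rw [← hf N hN, ← hf N' hN', hff']

theorem exists_isOpen_normal_le_forall_le_comap {G : Type*} [Group G] [TopologicalSpace G]
    [IsTopologicalGroup G] [CompactSpace G] {X : Set G} (hXfin : X.Finite)
    (hX : (Subgroup.closure X).topologicalClosure = ⊤) (N : Subgroup G) [N.Normal]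
    (hN : IsOpen (N : Set G)) :
    ∃ K : Subgroup G, K.Normal ∧ IsOpen (K : Set G) ∧ K ≤ N ∧
      ∀ φ : G →* G, Continuous φ → Function.Surjective φ → K ≤ K.comap φ := by
  set S := {N' : Subgroup G | N'.Normal ∧ IsOpen (N' : Set G) ∧ N'.index ≤ N.index}
  have hS : S.Finite := finite_setOf_normal_isOpen_index_le hXfin hX N.index
  refine ⟨sInf S, ?_, ?_, sInf_le ⟨inferInstance, hN, le_rfl⟩, ?_⟩
  · rw [sInf_eq_iInf']
    exact Subgroup.normal_iInf_normal fun N' => N'.2.1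
  · rw [Subgroup.coe_sInf]
    exact hS.isOpen_biInter fun N' hN' => hN'.2.1
  · intro φ hφ hsurj x hx
    rw [Subgroup.mem_comap, Subgroup.mem_sInf]
    intro N' ⟨hnormal, hopen, hindex⟩
    refine Subgroup.mem_sInf.1 hx (N'.comap φ) ⟨hnormal.comap φ, hopen.preimage hφ, ?_⟩
    rwa [Subgroup.index_comap_of_surjective _ hsurj]

theorem exists_pos_forall_dvd_inv_mul_iterate_mem {G : Type*} [Group G] {N : Subgroup G}
    [N.Normal] [Finite (G ⧸ N)] {φ : G →* G} (hφ : Function.Surjective φ)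
    (hN : N ≤ N.comap φ) :
    ∃ k > 0, ∀ j, k ∣ j → ∀ x, x⁻¹ * φ^[j] x ∈ N := by
  set ψ := QuotientGroup.map N N φ hN
  have hψ : Function.Bijective ψ := by
    have hsurj : Function.Surjective ψ :=
      QuotientGroup.map_surjective_of_surjective N N φ ((QuotientGroup.mk_surjective).comp hφ) hN
    exact ⟨Finite.injective_iff_surjective.2 hsurj, hsurj⟩
  set σ := Equiv.ofBijective ψ hψ
  refine ⟨orderOf σ, orderOf_pos σ, fun j hj x => QuotientGroup.eq.1 ?_⟩
  have hsemiconj : Function.Semiconj (QuotientGroup.mk : G → G ⧸ N) φ ψ := fun _ => rfl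
  calc (x : G ⧸ N) = (σ ^ j) x := by rw [orderOf_dvd_iff_pow_eq_one.1 hj]; rfl
    _ = ψ^[j] x := rfl
    _ = φ^[j] x := (hsemiconj.iterate_right j x).symm

theorem stmt3_general {T : Type*}
    [Group T] [TopologicalSpace T] [IsTopologicalGroup T]
    [CompactSpace T] [TotallyDisconnectedSpace T]
    (X : Set T) (hXfin : X.Finite) (hX : (Subgroup.closure X).topologicalClosure = ⊤)
    (φ : T ≃* T) (hφ_cont : Continuous φ) :
    ∀ t : T,
      Filter.Tendsto (fun n : ℕ => (⇑φ)^[n.factorial] t) Filter.atTop (nhds t) := by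
  intro t
  refine tendsto_nhds.2 fun U hU htU => ?_
  obtain ⟨N, hNU⟩ := ProfiniteGrp.exist_openNormalSubgroup_sub_open_nhds_of_one
    (hU.preimage (continuous_const_mul t)) (by simpa using htU)
  obtain ⟨K, hKnormal, hKopen, hKN, hKφ⟩ :=
    exists_isOpen_normal_le_forall_le_comap hXfin hX N.toSubgroup N.isOpen
  have := K.quotient_finite_of_isOpen hKopen
  obtain ⟨k, hk, hφK⟩ := exists_pos_forall_dvd_inv_mul_iterate_mem φ.surjective
    (hKφ φ.toMonoidHom hφ_cont φ.surjective)
  filter_upwards [Filter.eventually_ge_atTop k] with n hn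
  simpa using hNU (hKN (hφK _ (Nat.dvd_factorial hk hn) t))

/-- For a profinite group `T` topologically generated by a finite subset and a
continuous automorphism `φ : T → T`, for every `t ∈ T` the sequence `n ↦ φ^(n!)(t)`
converges to `t`. -/
theorem stmt3 {T : Type*}
    [Group T] [TopologicalSpace T] [IsTopologicalGroup T]
    [CompactSpace T] [T2Space T] [TotallyDisconnectedSpace T]
    (X : Set T) (hXfin : X.Finite) (hX : (Subgroup.closure X).topologicalClosure = ⊤)
    (φ : T ≃* T) (hφ_cont : Continuous φ) :
    ∀ t : T,
      Filter.Tendsto (fun n : ℕ => (⇑φ)^[n.factorial] t) Filter.atTop (nhds t) :=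
  stmt3_general X hXfin hX φ hφ_cont
end

section
/- Let G and T be profinite groups with G topologically generated by a finite subset, let π : G → T be a continuous surjective group homomorphism, let φ : T → T be a continuous group automorphism, and let Φ : G → G be a continuous group homomorphism such that π ∘ Φ = φ ∘ π. Then for every g ∈ G, the sequence n ↦ π(Φ^(n!)(g)) converges to π(g) as n → ∞. -/
/-!
Fix an open normal subgroup `H` of `T`. The maps `G → T ⧸ H`, `g ↦ φⁿ(π g) H`, are continuous
homomorphisms into a finite discrete group, hence determined by their values on the finite
topological generating set `X`; so two of them coincide, and since `π` and `φ` are surjective,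
`φ^d` induces the identity on `T ⧸ H` for some `d > 0`. As `d ∣ n!` for `n ≥ d`, and
`π ∘ Φ^(n!) = φ^(n!) ∘ π`, the sequence eventually lies in `π(g) H`.
-/

open Filter Topology

theorem MonoidHom.eq_of_eqOn_of_topologicalClosure_eq_top {G Q : Type*}
    [Group G] [TopologicalSpace G] [IsTopologicalGroup G]
    [Group Q] [TopologicalSpace Q] [T2Space Q]
    {X : Set G} (hX : (Subgroup.closure X).topologicalClosure = ⊤)
    {f g : G →* Q} (hf : Continuous f) (hg : Continuous g) (h : Set.EqOn f g X) : f = g := by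
  have hdense : Dense (Subgroup.closure X : Set G) := by
    rw [dense_iff_closure_eq, ← Subgroup.topologicalClosure_coe, hX, Subgroup.coe_top]
  exact DFunLike.coe_injective (hf.ext_on hdense hg (MonoidHom.eqOn_closure h))

theorem MonoidHom.finite_setOf_continuous {G Q : Type*}
    [Group G] [TopologicalSpace G] [IsTopologicalGroup G]
    [Group Q] [TopologicalSpace Q] [T2Space Q] [Finite Q]
    {X : Set G} (hXfin : X.Finite) (hX : (Subgroup.closure X).topologicalClosure = ⊤) :
    {f : G →* Q | Continuous f}.Finite := by
  have : Finite X := hXfin.to_subtype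
  refine Set.Finite.of_finite_image (f := fun f : G →* Q => X.domRestrict f) (Set.toFinite _) ?_
  intro f hf g hg hfg
  exact eq_of_eqOn_of_topologicalClosure_eq_top hX hf hg fun x hx => congrFun hfg ⟨x, hx⟩

theorem Function.Surjective.exists_pos_comp_iterate_eq {α β : Type*} {f : α → α}
    (hf : Function.Surjective f) (q : α → β)
    (h : (Set.range fun n : ℕ => q ∘ f^[n]).Finite) : ∃ d, 0 < d ∧ q ∘ f^[d] = q := by
  obtain ⟨a, b, hab, heq⟩ :=
    Set.Finite.exists_lt_map_eq_of_forall_mem (fun n => Set.mem_range_self n) h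
  refine ⟨b - a, Nat.sub_pos_of_lt hab, (hf.iterate a).injective_comp_right ?_⟩
  calc (q ∘ f^[b - a]) ∘ f^[a] = q ∘ f^[b] := by
        rw [Function.comp_assoc, ← Function.iterate_add, Nat.sub_add_cancel hab.le]
    _ = q ∘ f^[a] := heq.symm

theorem exists_pos_mk_comp_iterate_eq {G T : Type*}
    [Group G] [TopologicalSpace G] [IsTopologicalGroup G]
    [Group T] [TopologicalSpace T] [IsTopologicalGroup T] [CompactSpace T]
    {X : Set G} (hXfin : X.Finite) (hX : (Subgroup.closure X).topologicalClosure = ⊤)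
    {π : G →* T} (hπ : Continuous π) (hπ_surj : Function.Surjective π)
    {φ : T →* T} (hφ : Continuous φ) (hφ_surj : Function.Surjective φ)
    (H : OpenNormalSubgroup T) :
    ∃ d, 0 < d ∧ (QuotientGroup.mk : T → T ⧸ (H : Subgroup T)) ∘ φ^[d] = QuotientGroup.mk := by
  refine hφ_surj.exists_pos_comp_iterate_eq _ (Set.Finite.of_finite_image ?_
    hπ_surj.injective_comp_right.injOn)
  let χ : ℕ → G →* T ⧸ (H : Subgroup T) := fun n =>
    (QuotientGroup.mk' (H : Subgroup T)).comp (((show Monoid.End T from φ) ^ n).comp π)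
  have hχ : ∀ n, Continuous (χ n) := fun n =>
    continuous_quot_mk.comp ((hφ.iterate n).comp hπ)
  refine ((MonoidHom.finite_setOf_continuous hXfin hX).image DFunLike.coe).subset ?_
  rintro _ ⟨_, ⟨n, rfl⟩, rfl⟩
  exact ⟨χ n, hχ n, rfl⟩

theorem tendsto_of_forall_openNormalSubgroup {T ι : Type*}
    [Group T] [TopologicalSpace T] [IsTopologicalGroup T]
    [CompactSpace T] [TotallyDisconnectedSpace T]
    {l : Filter ι} {u : ι → T} {t : T}
    (h : ∀ H : OpenNormalSubgroup T, ∀ᶠ i in l, (u i : T ⧸ (H : Subgroup T)) = t) :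
    Tendsto u l (𝓝 t) := by
  refine tendsto_nhds.2 fun U hU htU => ?_
  obtain ⟨H, hH⟩ := ProfiniteGrp.exist_openNormalSubgroup_sub_open_nhds_of_one
    (hU.preimage (continuous_const_mul t)) (by simpa using htU)
  filter_upwards [h H] with i hi
  simpa using hH (QuotientGroup.eq.1 hi.symm)

theorem stmt4_general {G T : Type*}
    [Group G] [TopologicalSpace G] [IsTopologicalGroup G]
    [Group T] [TopologicalSpace T] [IsTopologicalGroup T]
    [CompactSpace T] [TotallyDisconnectedSpace T]
    (X : Set G) (hXfin : X.Finite) (hX : (Subgroup.closure X).topologicalClosure = ⊤)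
    (π : G →* T) (hπ_cont : Continuous π) (hπ_surj : Function.Surjective π)
    (φ : T ≃* T) (hφ_cont : Continuous φ)
    (Φ : G →* G)
    (hlift : ∀ g : G, π (Φ g) = φ (π g)) :
    ∀ g : G,
      Filter.Tendsto (fun n : ℕ => π ((⇑Φ)^[n.factorial] g)) Filter.atTop (nhds (π g)) := by
  intro g
  refine tendsto_of_forall_openNormalSubgroup fun H => ?_
  obtain ⟨d, hd, hperiod⟩ := exists_pos_mk_comp_iterate_eq hXfin hX hπ_cont hπ_surj
    (φ := φ.toMonoidHom) hφ_cont φ.surjective H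
  filter_upwards [eventually_ge_atTop d] with n hn
  obtain ⟨k, hk⟩ := Nat.dvd_factorial hd hn
  rw [Function.Semiconj.iterate_right hlift, hk, Function.iterate_mul]
  have hsemi : Function.Semiconj (QuotientGroup.mk : T → T ⧸ (H : Subgroup T)) (⇑φ)^[d] id :=
    congrFun hperiod
  simpa using hsemi.iterate_right k (π g)

/-- Let `G`, `T` be profinite groups with `G` topologically generated by a finite
subset, `π : G → T` a continuous surjective homomorphism, `φ : T → T` a continuous automorphism,
and `Φ : G → G` a continuous homomorphism with `π ∘ Φ = φ ∘ π`.  Then for every `g ∈ G` the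
sequence `n ↦ π(Φ^(n!)(g))` converges to `π(g)`. -/
theorem stmt4 {G T : Type*}
    [Group G] [TopologicalSpace G] [IsTopologicalGroup G]
    [CompactSpace G] [T2Space G] [TotallyDisconnectedSpace G]
    [Group T] [TopologicalSpace T] [IsTopologicalGroup T]
    [CompactSpace T] [T2Space T] [TotallyDisconnectedSpace T]
    (X : Set G) (hXfin : X.Finite) (hX : (Subgroup.closure X).topologicalClosure = ⊤)
    (π : G →* T) (hπ_cont : Continuous π) (hπ_surj : Function.Surjective π)
    (φ : T ≃* T) (hφ_cont : Continuous φ)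
    (Φ : G →* G) (hΦ_cont : Continuous Φ)
    (hlift : ∀ g : G, π (Φ g) = φ (π g)) :
    ∀ g : G,
      Filter.Tendsto (fun n : ℕ => π ((⇑Φ)^[n.factorial] g)) Filter.atTop (nhds (π g)) :=
  stmt4_general X hXfin hX π hπ_cont hπ_surj φ hφ_cont Φ hlift
end

section
/- Let F be the free group on three generators α, β, γ, and let Ψ : F → F be the group endomorphism determined by Ψ(α)=γαβ, Ψ(β)=γβα⁻¹γαβ, Ψ(γ)=γαβα⁻¹γβ. Let F₄ be the free group on four generators α, β, γ, δ, let Ψ₄ : F₄ → F₄ be the endomorphism determined by Ψ₄(α)=γαβ, Ψ₄(β)=γδαβ, Ψ₄(γ)=γαδβ, Ψ₄(δ)=γδαδβ, and let ξ : F₄ → F be the homomorphism determined by ξ(α)=α, ξ(β)=β, ξ(γ)=γ, ξ(δ)=βα⁻¹γ. Then ξ ∘ Ψ₄ = Ψ ∘ ξ. -/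
namespace Stmt9

/-- The generator α of the free group on three generators. -/
def α : FreeGroup (Fin 3) := FreeGroup.of 0
/-- The generator β of the free group on three generators. -/
def β : FreeGroup (Fin 3) := FreeGroup.of 1
/-- The generator γ of the free group on three generators. -/
def γ : FreeGroup (Fin 3) := FreeGroup.of 2

/-- The endomorphism Ψ of the free group on α, β, γ determined by
Ψ(α)=γαβ, Ψ(β)=γβα⁻¹γαβ, Ψ(γ)=γαβα⁻¹γβ. -/
def Ψ : FreeGroup (Fin 3) →* FreeGroup (Fin 3) :=
  FreeGroup.lift ![γ * α * β, γ * β * α⁻¹ * γ * α * β, γ * α * β * α⁻¹ * γ * β]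

/-- The generator α of the free group on four generators. -/
def α₄ : FreeGroup (Fin 4) := FreeGroup.of 0
/-- The generator β of the free group on four generators. -/
def β₄ : FreeGroup (Fin 4) := FreeGroup.of 1
/-- The generator γ of the free group on four generators. -/
def γ₄ : FreeGroup (Fin 4) := FreeGroup.of 2
/-- The generator δ of the free group on four generators. -/
def δ₄ : FreeGroup (Fin 4) := FreeGroup.of 3

/-- The endomorphism Ψ₄ of the free group on α, β, γ, δ determined by
Ψ₄(α)=γαβ, Ψ₄(β)=γδαβ, Ψ₄(γ)=γαδβ, Ψ₄(δ)=γδαδβ. -/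
def Ψ₄ : FreeGroup (Fin 4) →* FreeGroup (Fin 4) :=
  FreeGroup.lift ![γ₄ * α₄ * β₄, γ₄ * δ₄ * α₄ * β₄, γ₄ * α₄ * δ₄ * β₄, γ₄ * δ₄ * α₄ * δ₄ * β₄]

/-- The homomorphism ξ from the free group on four generators to the free group on three
generators determined by ξ(α)=α, ξ(β)=β, ξ(γ)=γ, ξ(δ)=βα⁻¹γ. -/
def ξ : FreeGroup (Fin 4) →* FreeGroup (Fin 3) :=
  FreeGroup.lift ![α, β, γ, β * α⁻¹ * γ]

@[simp] lemma ξ_α₄ : ξ α₄ = α := FreeGroup.lift_apply_of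
@[simp] lemma ξ_β₄ : ξ β₄ = β := FreeGroup.lift_apply_of
@[simp] lemma ξ_γ₄ : ξ γ₄ = γ := FreeGroup.lift_apply_of
@[simp] lemma ξ_δ₄ : ξ δ₄ = β * α⁻¹ * γ := FreeGroup.lift_apply_of

@[simp] lemma Ψ₄_α₄ : Ψ₄ α₄ = γ₄ * α₄ * β₄ := FreeGroup.lift_apply_of
@[simp] lemma Ψ₄_β₄ : Ψ₄ β₄ = γ₄ * δ₄ * α₄ * β₄ := FreeGroup.lift_apply_of
@[simp] lemma Ψ₄_γ₄ : Ψ₄ γ₄ = γ₄ * α₄ * δ₄ * β₄ := FreeGroup.lift_apply_of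
@[simp] lemma Ψ₄_δ₄ : Ψ₄ δ₄ = γ₄ * δ₄ * α₄ * δ₄ * β₄ := FreeGroup.lift_apply_of

@[simp] lemma Ψ_α : Ψ α = γ * α * β := FreeGroup.lift_apply_of
@[simp] lemma Ψ_β : Ψ β = γ * β * α⁻¹ * γ * α * β := FreeGroup.lift_apply_of
@[simp] lemma Ψ_γ : Ψ γ = γ * α * β * α⁻¹ * γ * β := FreeGroup.lift_apply_of

/-- `ξ ∘ Ψ₄ = Ψ ∘ ξ`. -/
theorem stmt9 : ξ.comp Ψ₄ = Ψ.comp ξ := by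
  ext i
  -- `ξ δ = βα⁻¹γ` is exactly what makes `ξ (Ψ₄ β) = Ψ β` and `ξ (Ψ₄ γ) = Ψ γ`;
  -- the image of `δ` then agrees because `Ψ β · (Ψ α)⁻¹ · Ψ γ` cancels `γαβ · (γαβ)⁻¹`.
  fin_cases i
  · show ξ (Ψ₄ α₄) = Ψ (ξ α₄)
    simp
  · show ξ (Ψ₄ β₄) = Ψ (ξ β₄)
    simp [mul_assoc]
  · show ξ (Ψ₄ γ₄) = Ψ (ξ γ₄)
    simp [mul_assoc]
  · show ξ (Ψ₄ δ₄) = Ψ (ξ δ₄)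
    simp
    group

end Stmt9
end

section
/- Let G be a commutative group and define the transformation T of G³ by T(x,y,z) = (z·x·y, z·y·x⁻¹·z·x·y, z·x·y·x⁻¹·z·y). Then for all a, b ∈ G and all n ≥ 0, the n-fold iterate satisfies Tⁿ(a, b, b) = (a·b^(eₙ), b^(4ⁿ), b^(4ⁿ)), where eₙ = 2·(4ⁿ − 1)/3 (the natural number satisfying 3·eₙ = 2·(4ⁿ − 1)). -/
/-!
By commutativity, triples of the form `(x, y, y)` are preserved: `T (x, y, y) = (x y², y⁴, y⁴)`.
Starting from `(a, b, b)`, step `k + 1` therefore multiplies the first entry by `b ^ (2 · 4 ^ k)`,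
so after `n` steps its exponent is twice the geometric sum `∑_{k < n} 4 ^ k = (4 ^ n - 1) / 3`.
-/

open Finset

def tripleMap (G : Type*) [Group G] (p : G × G × G) : G × G × G :=
  (p.2.2 * p.1 * p.2.1,
   p.2.2 * p.2.1 * p.1⁻¹ * p.2.2 * p.1 * p.2.1,
   p.2.2 * p.1 * p.2.1 * p.1⁻¹ * p.2.2 * p.2.1)

section CommGroup

variable {G : Type*} [CommGroup G]

theorem tripleMap_diag (x y : G) : tripleMap G (x, y, y) = (x * y ^ 2, y ^ 4, y ^ 4) := by
  simp only [tripleMap, Prod.mk.injEq]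
  refine ⟨?_, ?_, ?_⟩ <;>
  · apply Additive.ofMul.injective
    simp only [ofMul_mul, ofMul_inv, ofMul_pow]
    abel

theorem iterate_tripleMap_diag (x y : G) (n : ℕ) :
    (tripleMap G)^[n] (x, y, y) =
      (x * y ^ (2 * ∑ k ∈ range n, 4 ^ k), y ^ 4 ^ n, y ^ 4 ^ n) := by
  induction n with
  | zero => simp
  | succ n ih =>
    rw [Function.iterate_succ_apply', ih, tripleMap_diag, sum_range_succ, ← pow_mul, ← pow_mul,
      mul_add, pow_add, mul_assoc, pow_succ, mul_comm (4 ^ n) 2]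

end CommGroup

theorem three_mul_sum_range_four_pow (n : ℕ) : 3 * ∑ k ∈ range n, 4 ^ k = 4 ^ n - 1 := by
  have h := geom_sum_mul_add 3 n
  norm_num at h
  omega

/-- In a commutative group `G`, for the transformation
`T(x,y,z) = (zxy, zyx⁻¹zxy, zxyx⁻¹zy)` of `G³`, the `n`-fold iterate satisfies
`Tⁿ(a,b,b) = (a·b^eₙ, b^(4ⁿ), b^(4ⁿ))`, where `eₙ` is the natural number with
`3·eₙ = 2·(4ⁿ − 1)`. -/
theorem stmt13 {G : Type*} [CommGroup G] (a b : G) (n e : ℕ)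
    (he : 3 * e = 2 * (4 ^ n - 1)) :
    (fun p : G × G × G =>
        (p.2.2 * p.1 * p.2.1,
         p.2.2 * p.2.1 * p.1⁻¹ * p.2.2 * p.1 * p.2.1,
         p.2.2 * p.1 * p.2.1 * p.1⁻¹ * p.2.2 * p.2.1))^[n] (a, b, b) =
      (a * b ^ e, b ^ 4 ^ n, b ^ 4 ^ n) := by
  have hsum := three_mul_sum_range_four_pow n
  obtain rfl : e = 2 * ∑ k ∈ range n, 4 ^ k := by omega
  exact iterate_tripleMap_diag a b n
end

section
/- Let x be the 3-cycle (1 2 3) and y the 3-cycle (3 4 5) in the alternating group A₅ on five letters, and let T be the transformation of A₅ × A₅ given by T(u,v) = (u·v, v·u). Then: (i) the 6-fold iterate of T fixes the pair (x,y), i.e., T⁶(x,y) = (x,y); and (ii) the subgroup of A₅ generated by the two elements x·y·y·x and x·y·x·y·y·x is all of A₅ (these elements are the 5-cycle (1 3 2 5 4) and the 3-cycle (1 5 2)). -/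
/-!
The iterate is a finite computation. For the generation statement, let `H` be the subgroup
generated by the two elements: they are even, of orders 5 and 3, so `H ≤ A₅` and `15 ∣ |H|`,
i.e. `H` has index at most 4 in `A₅`. The action of `A₅` on the cosets of `H` has kernel the
normal core of `H`, whose index therefore divides `[A₅ : H]! ∣ 24`. As `A₅` is simple and
`60 ∤ 24`, the core is all of `A₅`, so `H = A₅`.
-/

open Equiv Nat

namespace Subgroup

variable {G : Type*} [Group G]

theorem index_normalCore_dvd_factorial (H : Subgroup G) [H.FiniteIndex] :
    H.normalCore.index ∣ H.index ! := by
  rw [normalCore_eq_ker, index_ker, index_eq_card, ← Nat.card_perm]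
  exact card_subgroup_dvd_card _

theorem eq_top_of_not_card_dvd_index_factorial [IsSimpleGroup G] (H : Subgroup G)
    [H.FiniteIndex] (h : ¬ Nat.card G ∣ H.index !) : H = ⊤ := by
  rcases IsSimpleGroup.eq_bot_or_eq_top_of_normal H.normalCore H.normalCore_normal with
    hbot | htop
  · rw [← index_bot, ← hbot] at h
    exact absurd H.index_normalCore_dvd_factorial h
  · exact top_le_iff.mp (htop ▸ H.normalCore_le)

end Subgroup

theorem eq_alternatingGroup_five_of_dvd_card {H : Subgroup (Perm (Fin 5))}
    (hH : H ≤ alternatingGroup (Fin 5)) (h15 : 15 ∣ Nat.card H) :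
    H = alternatingGroup (Fin 5) := by
  have hA₅ : Nat.card (alternatingGroup (Fin 5)) = 60 := by
    rw [nat_card_alternatingGroup, Nat.card_fin]; rfl
  set K := H.subgroupOf (alternatingGroup (Fin 5))
  have hK : Nat.card K = Nat.card H := Nat.card_congr (Subgroup.subgroupOfEquivOfLe hH).toEquiv
  have hindex : K.index ∣ 4 := by
    refine Nat.dvd_of_mul_dvd_mul_left (by norm_num : 0 < 15) (?_ : 15 * K.index ∣ 60)
    rw [← hA₅, ← K.card_mul_index, hK]
    exact mul_dvd_mul_right h15 _
  have : K.FiniteIndex := ⟨fun h ↦ by simp [h] at hindex⟩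
  have htop : K = ⊤ := K.eq_top_of_not_card_dvd_index_factorial <| by
    have := Nat.le_of_dvd (by norm_num) hindex
    rw [hA₅]
    interval_cases K.index <;> decide
  exact le_antisymm hH (Subgroup.subgroupOf_eq_top.mp htop)

theorem closure_pair_eq_alternatingGroup_five {σ τ : Perm (Fin 5)}
    (hσ : σ ∈ alternatingGroup (Fin 5)) (hτ : τ ∈ alternatingGroup (Fin 5))
    (hσ5 : orderOf σ = 5) (hτ3 : orderOf τ = 3) :
    Subgroup.closure {σ, τ} = alternatingGroup (Fin 5) := by
  refine eq_alternatingGroup_five_of_dvd_card ?_ ?_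
  · rw [Subgroup.closure_le]
    rintro g (rfl | rfl) <;> assumption
  · refine Nat.Coprime.mul_dvd_of_dvd_of_dvd (by norm_num : Nat.Coprime 5 3) ?_ ?_
    · exact hσ5.symm.dvd.trans (Subgroup.orderOf_dvd_natCard _ (Subgroup.subset_closure (by simp)))
    · exact hτ3.symm.dvd.trans (Subgroup.orderOf_dvd_natCard _ (Subgroup.subset_closure (by simp)))

set_option maxRecDepth 5000 in
/-- Let `x = (1 2 3)` and `y = (3 4 5)` be 3-cycles (on the five letters
`0,…,4` of `Fin 5` they are `c[0,1,2]` and `c[2,3,4]`), and let `T(u,v) = (u·v, v·u)`.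
Then `T⁶(x,y) = (x,y)`, and the subgroup generated by `x·y·y·x` and `x·y·x·y·y·x`
(the 5-cycle `(1 3 2 5 4)` and a 3-cycle) is the whole alternating group `A₅`. -/
theorem stmt16 :
    (fun p : Equiv.Perm (Fin 5) × Equiv.Perm (Fin 5) =>
        (p.1 * p.2, p.2 * p.1))^[6]
      (c[0, 1, 2], c[2, 3, 4]) = (c[0, 1, 2], c[2, 3, 4]) ∧
    Subgroup.closure
        ({c[0, 1, 2] * c[2, 3, 4] * c[2, 3, 4] * c[0, 1, 2],
          c[0, 1, 2] * c[2, 3, 4] * c[0, 1, 2] * c[2, 3, 4] * c[2, 3, 4] * c[0, 1, 2]} :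
          Set (Equiv.Perm (Fin 5))) = alternatingGroup (Fin 5) := by
  have : Fact (Nat.Prime 5) := ⟨by norm_num⟩
  refine ⟨by decide, closure_pair_eq_alternatingGroup_five ?_ ?_ ?_ ?_⟩
  · exact Perm.mem_alternatingGroup.mpr (by decide)
  · exact Perm.mem_alternatingGroup.mpr (by decide)
  · exact orderOf_eq_prime (by decide) (by decide)
  · exact orderOf_eq_prime (by decide) (by decide)
end

section
/- Let x be the 3-cycle (1 2 3) and y the 3-cycle (3 4 5) in the alternating group A₅ on five letters, and let T be the transformation of A₅ × A₅ given by T(u,v) = (u·v, u³·v). Then: (i) the 12-fold iterate of T fixes the pair (x,y), i.e., T¹²(x,y) = (x,y); and (ii) the subgroup of A₅ generated by {x, y} is all of A₅. -/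
/-!
`T` is built from group words, so it commutes with every automorphism of `A₅` acting diagonally
on `A₅ × A₅`. Three steps of `T` carry `(x, y)` to its conjugate by the 4-cycle `(1 5 3 4)`
(`c[0, 4, 2, 3]` on `Fin 5`), hence twelve steps carry it to its conjugate by the fourth power of
that 4-cycle, which is trivial.

The subgroup `H = ⟨x, y⟩` lies in `A₅` and contains elements of order 3 (`x`) and 5 (`xy`), so its
index in `A₅` divides 4. A proper subgroup of index `m` in the simple group `A₅` would make `A₅`
embed into `S_m` through the action on cosets, which is impossible as `60 ∤ m!` for `m ≤ 4`.
-/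

open Equiv

section Substitution

variable {G : Type*} [Group G]

variable (G) in
def substitutionMap : G × G → G × G := fun p => (p.1 * p.2, p.1 ^ 3 * p.2)

theorem substitutionMap_map {H F : Type*} [Group H] [FunLike F G H] [MonoidHomClass F G H]
    (f : F) (p : G × G) :
    substitutionMap H (Prod.map f f p) = Prod.map f f (substitutionMap G p) := by
  simp [substitutionMap, map_mul, map_pow]

theorem MulAut.coe_pow (f : MulAut G) (n : ℕ) : ⇑(f ^ n) = (⇑f)^[n] := by
  induction n with
  | zero => rfl
  | succ n ih => rw [Function.iterate_succ', ← ih, pow_succ']; rfl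

theorem isPeriodicPt_substitutionMap_of_iterate_eq_map {f : MulAut G} {k n : ℕ} {p : G × G}
    (hk : (substitutionMap G)^[k] p = Prod.map f f p) (hn : f ^ n = 1) :
    Function.IsPeriodicPt (substitutionMap G) (k * n) p := by
  have hcomm : Function.Commute (substitutionMap G)^[k] (Prod.map f f) :=
    Function.Commute.iterate_left (substitutionMap_map f) k
  rw [Function.IsPeriodicPt, Function.IsFixedPt, Function.iterate_mul,
    hcomm.iterate_eq_of_map_eq n hk, Prod.map_iterate, ← MulAut.coe_pow, hn]
  rfl

end Substitution

theorem Subgroup.eq_top_of_not_card_dvd_index_factorial_s17 {G : Type*} [Group G] [IsSimpleGroup G]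
    {H : Subgroup G} [H.FiniteIndex] (h : ¬ Nat.card G ∣ H.index.factorial) : H = ⊤ := by
  have hcore : H.normalCore.index ∣ H.index.factorial := by
    rw [normalCore_eq_ker, index_ker, index_eq_card, ← Nat.card_perm]
    exact card_subgroup_dvd_card _
  obtain hbot | htop := IsSimpleGroup.eq_bot_or_eq_top_of_normal _ H.normalCore_normal
  · rw [hbot, index_bot] at hcore
    exact absurd hcore h
  · exact top_le_iff.mp (htop ▸ H.normalCore_le)

theorem eq_alternatingGroup_of_fifteen_dvd_card {H : Subgroup (Perm (Fin 5))}
    (hle : H ≤ alternatingGroup (Fin 5)) (h15 : 15 ∣ Nat.card H) :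
    H = alternatingGroup (Fin 5) := by
  set H' := H.subgroupOf (alternatingGroup (Fin 5))
  have hcard : Nat.card H' * H'.index = 60 := by
    rw [H'.card_mul_index, nat_card_alternatingGroup, Nat.card_fin]; rfl
  rw [Nat.card_congr (Subgroup.subgroupOfEquivOfLe hle).toEquiv] at hcard
  have hindex : H'.index ∣ 4 := by
    obtain ⟨m, hm⟩ := h15
    rw [hm] at hcard
    exact Dvd.intro_left m (Nat.eq_of_mul_eq_mul_left (by norm_num : 0 < 15) (by linarith))
  have : H'.FiniteIndex := ⟨fun h0 => by simp [h0] at hindex⟩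
  have htop : H' = ⊤ := Subgroup.eq_top_of_not_card_dvd_index_factorial_s17 <| by
    rw [nat_card_alternatingGroup]
    have := Nat.le_of_dvd (by norm_num) hindex
    interval_cases H'.index <;> simp_all [Nat.factorial]
  exact le_antisymm hle (Subgroup.subgroupOf_eq_top.mp htop)

theorem closure_pair_eq_alternatingGroup_five_s17 {a b : Perm (Fin 5)} (ha : Perm.sign a = 1)
    (hb : Perm.sign b = 1) (ha3 : orderOf a = 3) (hab5 : orderOf (a * b) = 5) :
    Subgroup.closure {a, b} = alternatingGroup (Fin 5) := by
  have ha' : a ∈ Subgroup.closure {a, b} := Subgroup.subset_closure (Set.mem_insert _ _)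
  have hb' : b ∈ Subgroup.closure {a, b} := Subgroup.subset_closure (Set.mem_insert_of_mem _ rfl)
  refine eq_alternatingGroup_of_fifteen_dvd_card ?_ <|
    Nat.Coprime.mul_dvd_of_dvd_of_dvd (by norm_num) (ha3 ▸ Subgroup.orderOf_dvd_natCard _ ha')
      (hab5 ▸ Subgroup.orderOf_dvd_natCard _ (mul_mem ha' hb'))
  rw [Subgroup.closure_le, Set.insert_subset_iff, Set.singleton_subset_iff]
  exact ⟨ha, hb⟩

set_option maxRecDepth 10000 in
/-- Let `x = (1 2 3)` and `y = (3 4 5)` be 3-cycles (on the five letters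
`0,…,4` of `Fin 5` they are `c[0,1,2]` and `c[2,3,4]`), and let `T(u,v) = (u·v, u³·v)`.
Then `T¹²(x,y) = (x,y)`, and the subgroup generated by `{x, y}` is the whole
alternating group `A₅`. -/
theorem stmt17 :
    (fun p : Equiv.Perm (Fin 5) × Equiv.Perm (Fin 5) =>
        (p.1 * p.2, p.1 ^ 3 * p.2))^[12]
      (c[0, 1, 2], c[2, 3, 4]) = (c[0, 1, 2], c[2, 3, 4]) ∧
    Subgroup.closure ({c[0, 1, 2], c[2, 3, 4]} : Set (Equiv.Perm (Fin 5))) =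
      alternatingGroup (Fin 5) := by
  have : Fact (Nat.Prime 5) := ⟨by norm_num⟩
  refine ⟨?_, closure_pair_eq_alternatingGroup_five_s17 (by decide) (by decide)
    (orderOf_eq_prime (by decide) (by decide)) (orderOf_eq_prime (by decide) (by decide))⟩
  have h3 : (substitutionMap (Perm (Fin 5)))^[3] (c[0, 1, 2], c[2, 3, 4]) =
      Prod.map (MulAut.conj c[0, 4, 2, 3]) (MulAut.conj c[0, 4, 2, 3]) (c[0, 1, 2], c[2, 3, 4]) := by
    refine Prod.ext (Equiv.ext ?_) (Equiv.ext ?_) <;> decide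
  have h4 : MulAut.conj (c[0, 4, 2, 3] : Perm (Fin 5)) ^ 4 = 1 := by
    rw [← map_pow, show (c[0, 4, 2, 3] : Perm (Fin 5)) ^ 4 = 1 by decide, map_one]
  exact (isPeriodicPt_substitutionMap_of_iterate_eq_map h3 h4 :)
end
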